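/- arXiv:math/0004174 — 4 statements merged into one kernel-verified Lean document; each statement's English description precedes it below -/
import Mathlib

section
/- Let r ≥ k ≥ 0 be integers. The (r-k+1)×(r-k+1) matrix M whose (p,q)-entry (for 1 ≤ p,q ≤ r-k+1) is the binomial coefficient C(k+p, q) has determinant equal to C(r+1, k); in particular M is invertible. -/
/-!
Since `C(x, q+1) · (q+1)! = x · (x-1)(x-2)⋯(x-q)`, the matrix factors as
`diag(k+1+p) · [(k+p)(k+p-1)⋯(k+p-q+1)] · diag(1/(q+1)!)`. The middle factor evaluates the
monic falling-factorial polynomials of degrees `0, …, n` at the consecutive points `k, …, k+n`,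
so its determinant is the Vandermonde determinant of these points, the superfactorial `sf n`.
The outer factors contribute `(k+1)(k+2)⋯(k+n+1) = (n+1)! · C(k+n+1, n+1)` and
`1 / sf (n+1) = 1 / ((n+1)! · sf n)`.
-/

open Finset Matrix Polynomial Nat

theorem Nat.succ_choose_succ_mul_factorial (n q : ℕ) :
    (n + 1).choose (q + 1) * (q + 1)! = (n + 1) * n.descFactorial q := by
  rw [← succ_descFactorial_succ, descFactorial_eq_factorial_mul_choose, Nat.mul_comm]

theorem Nat.superFactorial_pos (n : ℕ) : 0 < n.superFactorial := by
  rw [← prod_range_succ_factorial]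
  exact prod_pos fun i _ => factorial_pos i

theorem Matrix.det_of_descFactorial_add {R : Type*} [CommRing R] [IsDomain R] (k n : ℕ) :
    (of fun p q : Fin (n + 1) => ((k + (p : ℕ)).descFactorial q : R)).det = n.superFactorial := by
  have hentry : ∀ p q : Fin (n + 1), ((k + (p : ℕ)).descFactorial q : R) =
      (descPochhammer R q).eval ((p : R) + k) := by
    intro p q
    rw [← descPochhammer_eval_eq_descFactorial, Nat.cast_add, add_comm]
  simp only [hentry]
  rw [← det_eval_matrixOfPolynomials_eq_det_vandermonde _ _ (descPochhammer_natDegree R ·)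
      (monic_descPochhammer R ·), det_vandermonde_add, det_vandermonde_id_eq_superFactorial]

theorem Matrix.det_of_choose_add_succ (k n : ℕ) :
    (of fun p q : Fin (n + 1) => ((k + 1 + (p : ℕ)).choose ((q : ℕ) + 1) : ℚ)).det =
      (k + n + 1).choose (n + 1) := by
  have hfactor : (of fun p q : Fin (n + 1) => ((k + 1 + (p : ℕ)).choose ((q : ℕ) + 1) : ℚ)) =
      diagonal (fun p : Fin (n + 1) => ((k + 1 + (p : ℕ) : ℕ) : ℚ)) *
        of (fun p q : Fin (n + 1) => ((k + (p : ℕ)).descFactorial q : ℚ)) *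
        diagonal (fun q : Fin (n + 1) => (((q : ℕ) + 1)! : ℚ)⁻¹) := by
    ext p q
    have h := succ_choose_succ_mul_factorial (k + p) q
    rw [mul_diagonal, diagonal_mul, of_apply, of_apply, eq_mul_inv_iff_mul_eq₀ (by positivity),
      show k + 1 + (p : ℕ) = k + p + 1 by omega]
    exact_mod_cast h
  have hrows : ∏ p : Fin (n + 1), ((k + 1 + (p : ℕ) : ℕ) : ℚ) =
      (n + 1)! * (k + n + 1).choose (n + 1) := by
    rw [Fin.prod_univ_eq_prod_range (fun i => ((k + 1 + i : ℕ) : ℚ)), ← Nat.cast_prod,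
      ← ascFactorial_eq_prod_range, ascFactorial_eq_factorial_mul_choose, add_assoc k n 1]
    push_cast; rfl
  have hcols : ∏ q : Fin (n + 1), (((q : ℕ) + 1)! : ℚ)⁻¹ =
      (((n + 1)! * n.superFactorial : ℕ) : ℚ)⁻¹ := by
    rw [prod_inv_distrib, Fin.prod_univ_eq_prod_range (fun i => (((i + 1)! : ℕ) : ℚ)),
      ← Nat.cast_prod, prod_range_factorial_succ, superFactorial_succ]
  rw [hfactor, det_mul, det_mul, det_diagonal, det_diagonal, det_of_descFactorial_add, hrows,
    hcols]
  have hsf : (n.superFactorial : ℚ) ≠ 0 := by exact_mod_cast (superFactorial_pos n).ne'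
  have hfact : ((n + 1)! : ℚ) ≠ 0 := by exact_mod_cast (factorial_pos _).ne'
  push_cast
  field_simp

/-- For integers `r ≥ k ≥ 0`, the `(r-k+1)×(r-k+1)` matrix with
`(p,q)`-entry the binomial coefficient `C(k+p, q)` (rows indexed by `k+1, …, r+1`,
columns by `1, …, r-k+1`) has determinant `C(r+1, k)`; in particular it is
invertible (over ℚ). -/
theorem stmt_1 (r k : ℕ) (hkr : k ≤ r) :
    (Matrix.of fun p q : Fin (r - k + 1) =>
        ((Nat.choose (k + 1 + (p : ℕ)) ((q : ℕ) + 1) : ℚ))).det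
      = (Nat.choose (r + 1) k : ℚ) ∧
    IsUnit (Matrix.of fun p q : Fin (r - k + 1) =>
        ((Nat.choose (k + 1 + (p : ℕ)) ((q : ℕ) + 1) : ℚ))) := by
  have hdet : (Matrix.of fun p q : Fin (r - k + 1) =>
      ((Nat.choose (k + 1 + (p : ℕ)) ((q : ℕ) + 1) : ℚ))).det =
        (Nat.choose (r + 1) k : ℚ) := by
    rw [det_of_choose_add_succ, show k + (r - k) + 1 = r + 1 by omega,
      choose_symm_of_eq_add (by omega : r + 1 = (r - k + 1) + k)]
  refine ⟨hdet, ?_⟩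
  rw [isUnit_iff_isUnit_det, hdet, isUnit_iff_ne_zero]
  exact_mod_cast (choose_pos (by omega : k ≤ r + 1)).ne'
end

section
/- Let π(t) ∈ ℂ[t] be a polynomial of degree N with π(0) = 1. Then the set {t^r : 0 ≤ r < N} ∪ {t^m π(t) : m ∈ ℤ} is a ℂ-basis of the Laurent polynomial ring ℂ[t, t^{-1}]. -/
/-!
With `p` the image of `π`, the family `tᵐ p` is the image of the monomial basis under the
injective map `(· * p)`, so it is a basis of the ideal `(p)`; the theorem thus says that
`ℂ[t, t⁻¹]` is the direct sum of the polynomials of degree `< N` and `(p)`. Everything rests on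
`π` being coprime to every `tⁿ`, as `π(0) ≠ 0`. Writing a Laurent polynomial as `t⁻ⁿ Q`, a Bézout
relation `a tⁿ + b π = 1` shows it is a polynomial modulo `(p)`, and Euclidean division by `π`
brings that polynomial to degree `< N`. Conversely, if a polynomial `P` of degree `< N` lies in
`(p)` then `π ∣ P tⁿ` for some `n`, hence `π ∣ P`, so `P = 0`.
-/

open Polynomial LaurentPolynomial Submodule

namespace LaurentPolynomial

noncomputable def basisT (R : Type*) [Semiring R] : Module.Basis ℤ R R[T;T⁻¹] :=
  AddMonoidAlgebra.basis ℤ R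

variable {K : Type*} [Field K]

theorem span_range_T_natCast_fin (N : ℕ) :
    span K (Set.range fun r : Fin N => (T r : K[T;T⁻¹])) =
      (degreeLT K N).map toLaurentAlg.toLinearMap := by
  classical
  rw [degreeLT_eq_span_X_pow, map_span]
  congr 1
  ext x
  simp [toLaurentAlg_apply, Fin.exists_iff]

theorem span_range_T_mul (p : K[T;T⁻¹]) :
    span K (Set.range fun m : ℤ => T m * p) = LinearMap.range (LinearMap.mulRight K p) := by
  change span K (Set.range (LinearMap.mulRight K p ∘ basisT K)) = _
  rw [Set.range_comp, span_image, (basisT K).span_eq, LinearMap.range_eq_map]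

theorem linearIndependent_T_mul {p : K[T;T⁻¹]} (hp : p ≠ 0) :
    LinearIndependent K fun m : ℤ => T m * p :=
  (basisT K).linearIndependent.map' (LinearMap.mulRight K p)
    (LinearMap.ker_eq_bot.mpr fun _ _ h => mul_right_cancel₀ hp h)

theorem isCoprime_X_pow_of_coeff_zero_ne_zero {π : K[X]} (h0 : π.coeff 0 ≠ 0) (n : ℕ) :
    IsCoprime (X ^ n) π :=
  (prime_X.coprime_iff_not_dvd.mpr (X_dvd_iff.not.mpr h0)).pow_left

theorem disjoint_degreeLT_range_mulRight {π : K[X]} (h0 : π.coeff 0 ≠ 0) :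
    Disjoint ((degreeLT K π.natDegree).map toLaurentAlg.toLinearMap)
      (LinearMap.range (LinearMap.mulRight K (toLaurent π))) := by
  rw [disjoint_def]
  rintro _ ⟨P, hP, rfl⟩ ⟨q, hq⟩
  obtain ⟨n, Q, hQ⟩ := exists_T_pow q
  have hPQ : P * X ^ n = π * Q := toLaurent_injective <| by
    simp only [LinearMap.mulRight_apply, AlgHom.toLinearMap_apply, toLaurentAlg_apply] at hq
    rw [map_mul, map_mul, toLaurent_X_pow, hQ, ← hq]
    ring
  have hπ : π ≠ 0 := fun h => h0 (by simp [h])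
  have hπP : π ∣ P := (isCoprime_X_pow_of_coeff_zero_ne_zero h0 n).symm.dvd_of_dvd_mul_right
    ⟨Q, hPQ⟩
  have hP0 : P = 0 := eq_zero_of_dvd_of_degree_lt hπP
    ((mem_degreeLT.mp hP).trans_eq (degree_eq_natDegree hπ).symm)
  simp [hP0]

theorem toLaurent_mem_degreeLT_sup_range_mulRight {π : K[X]} (hπ : π ≠ 0) (P : K[X]) :
    toLaurent P ∈ (degreeLT K π.natDegree).map toLaurentAlg.toLinearMap ⊔
      LinearMap.range (LinearMap.mulRight K (toLaurent π)) := by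
  have hmod : P % π ∈ degreeLT K π.natDegree :=
    mem_degreeLT.mpr ((degree_mod_lt P hπ).trans_eq (degree_eq_natDegree hπ))
  rw [← EuclideanDomain.div_add_mod P π, map_add, add_comm]
  refine add_mem_sup ⟨P % π, hmod, rfl⟩ ⟨toLaurent (P / π), ?_⟩
  simp [mul_comm]

theorem degreeLT_sup_range_mulRight {π : K[X]} (h0 : π.coeff 0 ≠ 0) :
    (degreeLT K π.natDegree).map toLaurentAlg.toLinearMap ⊔
      LinearMap.range (LinearMap.mulRight K (toLaurent π)) = ⊤ := by
  have hπ : π ≠ 0 := fun h => h0 (by simp [h])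
  refine eq_top_iff.mpr fun x _ => ?_
  obtain ⟨n, Q, hQ⟩ := exists_T_pow x
  obtain ⟨a, b, hab⟩ := isCoprime_X_pow_of_coeff_zero_ne_zero h0 n
  have hx : x = toLaurent (Q * a) + x * toLaurent b * toLaurent π :=
    calc x = x * toLaurent (a * X ^ n + b * π) := by rw [hab, map_one, mul_one]
      _ = toLaurent (Q * a) + x * toLaurent b * toLaurent π := by
        rw [map_add, map_mul, map_mul, map_mul, toLaurent_X_pow, hQ]
        ring
  rw [hx]
  exact add_mem (toLaurent_mem_degreeLT_sup_range_mulRight hπ _)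
    (mem_sup_right ⟨x * toLaurent b, rfl⟩)

theorem isCompl_degreeLT_range_mulRight {π : K[X]} (h0 : π.coeff 0 ≠ 0) :
    IsCompl ((degreeLT K π.natDegree).map toLaurentAlg.toLinearMap)
      (LinearMap.range (LinearMap.mulRight K (toLaurent π))) :=
  ⟨disjoint_degreeLT_range_mulRight h0, codisjoint_iff.mpr (degreeLT_sup_range_mulRight h0)⟩

end LaurentPolynomial

/-- If `π ∈ ℂ[t]` has degree `N` and `π(0) = 1`, then
`{t^r : 0 ≤ r < N} ∪ {t^m π(t) : m ∈ ℤ}` is a ℂ-basis of `ℂ[t, t⁻¹]`: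
the corresponding family (indexed by `Fin N ⊕ ℤ`) is linearly independent
and spans the Laurent polynomial ring. -/
theorem stmt_3 (N : ℕ) (π : Polynomial ℂ) (h0 : π.coeff 0 = 1) (hdeg : π.natDegree = N)
    (f : Fin N ⊕ ℤ → LaurentPolynomial ℂ)
    (hf1 : ∀ r : Fin N, f (Sum.inl r) = LaurentPolynomial.T (r : ℤ))
    (hf2 : ∀ m : ℤ, f (Sum.inr m) = LaurentPolynomial.T m * Polynomial.toLaurent π) :
    LinearIndependent ℂ f ∧ Submodule.span ℂ (Set.range f) = ⊤ := by
  subst hdeg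
  have h0' : π.coeff 0 ≠ 0 := h0 ▸ one_ne_zero
  have hπ : toLaurent π ≠ 0 := toLaurent_ne_zero.mpr fun h => h0' (by simp [h])
  have hf : f = Sum.elim (fun r : Fin π.natDegree => T (r : ℤ))
      (fun m : ℤ => T m * toLaurent π) :=
    funext <| Sum.rec hf1 hf2
  have hcompl := isCompl_degreeLT_range_mulRight h0'
  subst hf
  rw [linearIndependent_sum, Set.Sum.elim_range, span_union]
  simp only [Sum.elim_comp_inl, Sum.elim_comp_inr, span_range_T_natCast_fin, span_range_T_mul]
  exact ⟨⟨(basisT ℂ).linearIndependent.comp _ (Int.ofNat_injective.comp Fin.val_injective),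
    linearIndependent_T_mul hπ, hcompl.disjoint⟩, hcompl.sup_eq_top⟩
end

section
/- Let R_m = ℂ[z_0, …, z_{m-1}], let Z_0(u) = ∑_{i=0}^{m-1} z_i u^{i+1} ∈ R_m[u], and let J_m be the ideal of R_m generated by all coefficients (Z_0(u)^r)_s of u^s in Z_0(u)^r for r ≥ 1 and s ≥ m + 1. Setting Z_1(u) = ∑_{i=1}^{m-1} z_i u^i, every coefficient (Z_1(u)^r)_s with r ≥ 1 and s ≥ m lies in J_m. -/
open Polynomial

/-- `Z₀(u) = ∑_{i=0}^{m-1} z_i u^{i+1}` in `R_m[u]`, `R_m = ℂ[z_0,…,z_{m-1}]`. -/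
noncomputable def Zzero (m : ℕ) : Polynomial (MvPolynomial (Fin m) ℂ) :=
  ∑ i : Fin m, Polynomial.C (MvPolynomial.X i) * Polynomial.X ^ ((i : ℕ) + 1)

/-- `Z₁(u) = ∑_{i=1}^{m-1} z_i u^i`. -/
noncomputable def Zone (m : ℕ) : Polynomial (MvPolynomial (Fin m) ℂ) :=
  ∑ i ∈ Finset.univ.filter (fun i : Fin m => 1 ≤ (i : ℕ)),
    Polynomial.C (MvPolynomial.X i) * Polynomial.X ^ (i : ℕ)

/-- The ideal `J_m` generated by the coefficients `(Z₀(u)^r)_s` for `r ≥ 1`, `s ≥ m+1`. -/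
noncomputable def Jm (m : ℕ) : Ideal (MvPolynomial (Fin m) ℂ) :=
  Ideal.span {x | ∃ r s : ℕ, 1 ≤ r ∧ m + 1 ≤ s ∧ x = ((Zzero m) ^ r).coeff s}

/-!
Since `Z₀ = u (z₀ + Z₁)`, the coefficient `((z₀ + Z₁)^k)_s` equals `(Z₀^k)_{s+k}`, which lies in
`J_m` for `k ≥ 1` and `s ≥ m`. Expanding `Z₁^r = ((z₀ + Z₁) - z₀)^r` binomially writes `(Z₁^r)_s` as
a combination of these coefficients, up to the `k = 0` term `(1)_s`, which vanishes because `s ≥ m ≥ 1`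
(for `m = 0`, `Z₁ = 0`).
-/

theorem Polynomial.coeff_sub_C_pow_mem {R : Type*} [CommRing R] (I : Ideal R) (p : R[X]) (c : R)
    (r : ℕ) {s : ℕ} (hs : s ≠ 0) (h : ∀ k, 1 ≤ k → (p ^ k).coeff s ∈ I) :
    ((p - C c) ^ r).coeff s ∈ I := by
  rw [sub_eq_add_neg, ← map_neg, add_pow, finsetSum_coeff]
  refine Ideal.sum_mem _ fun k _ => ?_
  rw [← C_eq_natCast, ← map_pow, mul_assoc, ← map_mul, coeff_mul_C]
  rcases Nat.eq_zero_or_pos k with rfl | hk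
  · simp [coeff_one, hs]
  · exact Ideal.mul_mem_right _ _ (h k hk)

theorem Zone_zero : Zone 0 = 0 := by
  simp [Zone]

theorem Zzero_eq_X_mul {m : ℕ} (hm : 0 < m) :
    Zzero m = X * (C (MvPolynomial.X (⟨0, hm⟩ : Fin m)) + Zone m) := by
  have h_filter_not : Finset.univ.filter (fun i : Fin m => ¬ 1 ≤ (i : ℕ)) = {⟨0, hm⟩} := by
    ext i
    simp [Fin.ext_iff]
  rw [Zzero, Zone, mul_add, Finset.mul_sum,
    ← Finset.sum_filter_add_sum_filter_not Finset.univ (fun i : Fin m => 1 ≤ (i : ℕ)),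
    h_filter_not, Finset.sum_singleton, add_comm]
  refine congrArg₂ (· + ·) ?_ ?_
  · simp
  · exact Finset.sum_congr rfl fun i _ => by ring

theorem coeff_C_X_zero_add_Zone_pow_mem_Jm {m : ℕ} (hm : 0 < m) {k s : ℕ} (hk : 1 ≤ k)
    (hs : m ≤ s) : ((C (MvPolynomial.X (⟨0, hm⟩ : Fin m)) + Zone m) ^ k).coeff s ∈ Jm m := by
  refine Ideal.subset_span ⟨k, s + k, hk, by omega, ?_⟩
  rw [Zzero_eq_X_mul hm, mul_pow, coeff_X_pow_mul]

/-- every coefficient `(Z₁(u)^r)_s` with `r ≥ 1` and `s ≥ m` lies in `J_m`. -/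
theorem stmt_9 (m : ℕ) (r s : ℕ) (hr : 1 ≤ r) (hs : m ≤ s) :
    ((Zone m) ^ r).coeff s ∈ Jm m := by
  rcases Nat.eq_zero_or_pos m with rfl | hm
  · simp [Zone_zero, zero_pow (by omega : r ≠ 0)]
  · rw [← add_sub_cancel_left (C (MvPolynomial.X (⟨0, hm⟩ : Fin m))) (Zone m)]
    exact coeff_sub_C_pow_mem _ _ _ r (by omega) fun k hk =>
      coeff_C_X_zero_add_Zone_pow_mem_Jm hm hk hs
end

section
/- Let V be a 2-dimensional ℂ-vector space with basis {v_+, v_-}, and let S^m(V ⊗ ℂ[t, t^{-1}]) denote the m-th symmetric power of V ⊗ ℂ[t,t^{-1}] as a ℂ-vector space. Then S^m(V ⊗ ℂ[t,t^{-1}]) is a free module of rank 2^m over the ring ℂ[t_1^{±1}, …, t_m^{±1}]^{Σ_m} of symmetric Laurent polynomials, where the module structure comes from the identification of the m-fold tensor power T^m(V ⊗ ℂ[t,t^{-1}]) with V^{⊗m} ⊗ ℂ[t_1^{±1}, …, t_m^{±1}]. -/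
/-- The ring of Laurent polynomials in `m` variables, `ℂ[t₁^{±1}, …, t_m^{±1}]`,
modelled as the group algebra of the exponent lattice `Fin m → ℤ`. -/
abbrev LaurentM (m : ℕ) := AddMonoidAlgebra ℂ (Fin m → ℤ)

/-- A permutation of the variables, acting on exponent vectors. -/
def expEquiv {m : ℕ} (σ : Equiv.Perm (Fin m)) : (Fin m → ℤ) ≃ (Fin m → ℤ) :=
  Equiv.arrowCongr σ (Equiv.refl ℤ)

/-- The set of symmetric Laurent polynomials (invariant under `Σ_m`). -/
def symmLaurent (m : ℕ) : Set (LaurentM m) :=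
  {p | ∀ σ : Equiv.Perm (Fin m), AddMonoidAlgebra.ofCoeff (Finsupp.equivMapDomain (expEquiv σ) p.coeff) = p}

/-- The `m`-th symmetric power `S^m(V ⊗ ℂ[t,t⁻¹])` for `V` two-dimensional with
basis `{v₊, v₋}`: the `m`-fold tensor power `T^m(V ⊗ ℂ[t,t⁻¹])` is identified
with `V^{⊗m} ⊗ ℂ[t₁^{±1},…,t_m^{±1}]`, i.e. with functions from the basis
index set `Fin m → Fin 2` of `V^{⊗m}` to `P_m`, and `S^m` is the subspace of
invariants under the diagonal `Σ_m`-action (permuting the tensor factors of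
`V^{⊗m}` and the variables `t₁,…,t_m` simultaneously). -/
def symPower (m : ℕ) : Set ((Fin m → Fin 2) → LaurentM m) :=
  {F | ∀ σ : Equiv.Perm (Fin m), ∀ ε : Fin m → Fin 2,
    AddMonoidAlgebra.ofCoeff (Finsupp.equivMapDomain (expEquiv σ) (F (ε ∘ σ)).coeff) = F ε}

noncomputable section

namespace St13

variable {m : ℕ}

instance : CoeFun (LaurentM m) (fun _ => (Fin m → ℤ) → ℂ) := ⟨fun p => p.coeff⟩

instance (priority := 3000) : WellFoundedLT (Fin m) := Finite.to_wellFoundedLT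

/-- abbreviation for single -/
abbrev sg (v : Fin m → ℤ) (c : ℂ) : LaurentM m := AddMonoidAlgebra.single v c

/-- the permutation action -/
def act (σ : Equiv.Perm (Fin m)) (w : LaurentM m) : LaurentM m :=
  AddMonoidAlgebra.ofCoeff (Finsupp.equivMapDomain (expEquiv σ) w.coeff)

lemma expEquiv_symm_apply (σ : Equiv.Perm (Fin m)) (a : Fin m → ℤ) :
    (expEquiv σ).symm a = a ∘ σ := rfl

lemma expEquiv_apply (σ : Equiv.Perm (Fin m)) (a : Fin m → ℤ) :
    (expEquiv σ) a = a ∘ σ.symm := rfl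

lemma act_apply (σ : Equiv.Perm (Fin m)) (w : LaurentM m) (v : Fin m → ℤ) :
    act σ w v = w (v ∘ σ) := by
  rw [act, AddMonoidAlgebra.coeff_ofCoeff, Finsupp.equivMapDomain_apply, expEquiv_symm_apply]

lemma mem_symm_iff {w : LaurentM m} : w ∈ symmLaurent m ↔ ∀ σ, act σ w = w := Iff.rfl

lemma act_single (σ : Equiv.Perm (Fin m)) (v : Fin m → ℤ) (c : ℂ) :
    act σ (sg v c) = sg (v ∘ σ.symm) c := by
  rw [act]
  rw [show (sg v c : LaurentM m) = AddMonoidAlgebra.ofCoeff (Finsupp.single v c) from rfl,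
    AddMonoidAlgebra.coeff_ofCoeff, Finsupp.equivMapDomain_single, expEquiv_apply]
  rfl

lemma act_add (σ : Equiv.Perm (Fin m)) (x y : LaurentM m) :
    act σ (x + y) = act σ x + act σ y := by
  ext v
  rw [AddMonoidAlgebra.coeff_add, Finsupp.add_apply, act_apply, act_apply, act_apply,
    AddMonoidAlgebra.coeff_add, Finsupp.add_apply]

lemma act_sub (σ : Equiv.Perm (Fin m)) (x y : LaurentM m) :
    act σ (x - y) = act σ x - act σ y := by
  ext v
  rw [AddMonoidAlgebra.coeff_sub, Finsupp.sub_apply, act_apply, act_apply, act_apply,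
    AddMonoidAlgebra.coeff_sub, Finsupp.sub_apply]

lemma act_smul (σ : Equiv.Perm (Fin m)) (γ : ℂ) (x : LaurentM m) :
    act σ (γ • x) = γ • act σ x := by
  ext v
  rw [AddMonoidAlgebra.coeff_smul_apply, act_apply, act_apply, AddMonoidAlgebra.coeff_smul_apply]

lemma act_sum {α : Type*} (σ : Equiv.Perm (Fin m)) (s : Finset α) (f : α → LaurentM m) :
    act σ (∑ a ∈ s, f a) = ∑ a ∈ s, act σ (f a) := by
  ext v
  rw [AddMonoidAlgebra.coeff_sum, Finsupp.finset_sum_apply, act_apply, AddMonoidAlgebra.coeff_sum,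
    Finsupp.finset_sum_apply]
  exact Finset.sum_congr rfl fun a _ => (act_apply σ (f a) v).symm

lemma act_mul_single (σ : Equiv.Perm (Fin m)) (x : LaurentM m) (v : Fin m → ℤ) (c : ℂ) :
    act σ (x * sg v c) = act σ x * sg (v ∘ σ.symm) c := by
  ext u
  rw [act_apply, AddMonoidAlgebra.coeff_mul_single_apply, AddMonoidAlgebra.coeff_mul_single_apply, act_apply]
  simp only [← sub_eq_add_neg]
  have h : u ∘ ⇑σ - v = (u - v ∘ ⇑σ.symm) ∘ ⇑σ := by
    funext j; simp
  rw [h]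

lemma symm_add {x y : LaurentM m} (hx : x ∈ symmLaurent m) (hy : y ∈ symmLaurent m) :
    x + y ∈ symmLaurent m := by
  rw [mem_symm_iff] at *
  intro σ; rw [act_add, hx σ, hy σ]

lemma symm_sub {x y : LaurentM m} (hx : x ∈ symmLaurent m) (hy : y ∈ symmLaurent m) :
    x - y ∈ symmLaurent m := by
  rw [mem_symm_iff] at *
  intro σ; rw [act_sub, hx σ, hy σ]

lemma symm_smul {x : LaurentM m} (γ : ℂ) (hx : x ∈ symmLaurent m) :
    γ • x ∈ symmLaurent m := by
  rw [mem_symm_iff] at *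
  intro σ; rw [act_smul, hx σ]

lemma symm_zero : (0 : LaurentM m) ∈ symmLaurent m := by
  rw [mem_symm_iff]
  intro σ; ext v; rw [act_apply]; rfl

/-- support of a symmetric element is permutation invariant -/
lemma symm_supp_perm {w : LaurentM m} (hw : w ∈ symmLaurent m) (σ : Equiv.Perm (Fin m))
    (v : Fin m → ℤ) : w (v ∘ σ) = w v := by
  rw [mem_symm_iff] at hw
  conv_rhs => rw [← hw σ]
  rw [act_apply]

/-! ### Doubling map -/

def dblE : (Fin m → ℤ) →+ (Fin m → ℤ) where
  toFun a := a + a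
  map_zero' := by funext j; simp
  map_add' a b := by funext j; simp; ring

lemma dblE_injective : Function.Injective (dblE (m := m)) := by
  intro a b h
  funext j
  have := congrFun h j
  simp [dblE] at this
  omega

def D : LaurentM m →+ LaurentM m where
  toFun := AddMonoidAlgebra.mapDomain dblE
  map_zero' := AddMonoidAlgebra.mapDomain_zero _
  map_add' := AddMonoidAlgebra.mapDomain_add _

lemma D_apply (x : LaurentM m) : D x = AddMonoidAlgebra.mapDomain dblE x := rfl

lemma D_single (v : Fin m → ℤ) (c : ℂ) : D (sg v c) = sg (v + v) c := by
  rw [D_apply]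
  exact AddMonoidAlgebra.mapDomain_single

lemma D_mul (x y : LaurentM m) : D (x * y) = D x * D y := by
  rw [D_apply, D_apply, D_apply]
  exact AddMonoidAlgebra.mapDomain_mul dblE x y

lemma D_smul (γ : ℂ) (x : LaurentM m) : D (γ • x) = γ • D x := by
  rw [D_apply, D_apply]
  exact AddMonoidAlgebra.coeff_injective (Finsupp.mapDomain_smul γ x.coeff)

lemma D_apply_dbl (x : LaurentM m) (a : Fin m → ℤ) : D x (a + a) = x a := by
  rw [D_apply]
  exact Finsupp.mapDomain_apply dblE_injective x.coeff a

lemma D_supp {x : LaurentM m} {u : Fin m → ℤ} (h : D x u ≠ 0) :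
    ∃ a, (x a ≠ 0) ∧ u = a + a := by
  classical
  have hu : u ∈ (Finsupp.mapDomain dblE x.coeff).support := Finsupp.mem_support_iff.mpr h
  have h2 := Finsupp.mapDomain_support (f := (dblE : (Fin m → ℤ) →+ _).toFun) (s := x.coeff) hu
  rw [Finset.mem_image] at h2
  obtain ⟨a, ha, hae⟩ := h2
  exact ⟨a, Finsupp.mem_support_iff.mp ha, hae ▸ rfl⟩

lemma act_D (σ : Equiv.Perm (Fin m)) (x : LaurentM m) : act σ (D x) = D (act σ x) := by
  show AddMonoidAlgebra.ofCoeff (Finsupp.equivMapDomain (expEquiv σ)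
      (Finsupp.mapDomain dblE x.coeff)) = AddMonoidAlgebra.ofCoeff (Finsupp.mapDomain dblE
      (Finsupp.equivMapDomain (expEquiv σ) x.coeff))
  rw [Finsupp.equivMapDomain_eq_mapDomain,
    Finsupp.equivMapDomain_eq_mapDomain, ← Finsupp.mapDomain_comp, ← Finsupp.mapDomain_comp]
  congr 2



/-! ### Lex order and decreasing vectors -/

def Dec (v : Fin m → ℤ) : Prop := ∀ i j : Fin m, i ≤ j → v j ≤ v i

lemma dec_perm_lex_le {v : Fin m → ℤ} (hv : Dec v) (τ : Equiv.Perm (Fin m)) :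
    toLex (v ∘ τ) ≤ toLex v := by
  classical
  rcases le_or_gt (α := Lex (Fin m → ℤ)) (toLex (v ∘ τ)) (toLex v) with hle | hcon
  · exact hle
  exfalso
  obtain ⟨i, hagree, hlt⟩ := hcon
  set K : Finset (Fin m) := Finset.univ.filter (fun l => v i < v l) with hK
  have hiK : i ∉ K := by
    rw [hK, Finset.mem_filter]
    simp
  have hmap : ∀ l ∈ insert i K, τ l ∈ K := by
    intro l hl
    rcases Finset.mem_insert.mp hl with rfl | hl
    · rw [hK, Finset.mem_filter]
      exact ⟨Finset.mem_univ _, hlt⟩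
    · rw [hK, Finset.mem_filter] at hl ⊢
      have hli : l < i := by
        by_contra hli
        push_neg at hli
        exact absurd (hv i l hli) (not_le.mpr hl.2)
      have := hagree l hli
      refine ⟨Finset.mem_univ _, ?_⟩
      have : v l = v (τ l) := this
      rw [← this]
      exact hl.2
  have hinj : Set.InjOn τ (insert i K : Finset (Fin m)) := fun a _ b _ h => τ.injective h
  have hcard := Finset.card_le_card_of_injOn τ hmap hinj
  rw [Finset.card_insert_of_notMem hiK] at hcard
  omega

lemma max_dec {w : LaurentM m} (hw : w ∈ symmLaurent m) {μ : Fin m → ℤ}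
    (hmax : ∀ u, w u ≠ 0 → toLex u ≤ toLex μ) (hμ : w μ ≠ 0) : Dec μ := by
  intro i j hij
  by_contra h
  push_neg at h
  have hij' : i < j := by
    rcases lt_or_eq_of_le hij with h' | rfl
    · exact h'
    · omega
  have h2 : w (μ ∘ Equiv.swap i j) ≠ 0 := by
    rw [symm_supp_perm hw]
    exact hμ
  have h3 := hmax _ h2
  have h4 : toLex μ < toLex (μ ∘ Equiv.swap i j) := by
    refine ⟨i, fun l hl => ?_, ?_⟩
    · have hli : l ≠ i := ne_of_lt hl
      have hlj : l ≠ j := ne_of_lt (lt_of_lt_of_le hl hij)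
      show μ l = μ (Equiv.swap i j l)
      rw [Equiv.swap_apply_of_ne_of_ne hli hlj]
    · show μ i < μ (Equiv.swap i j i)
      rw [Equiv.swap_apply_left]
      exact h
  exact absurd (lt_of_lt_of_le h4 h3) (lt_irrefl _)

/-! ### Orbit sums -/

def OS (v : Fin m → ℤ) : LaurentM m := ∑ τ : Equiv.Perm (Fin m), sg (v ∘ τ) 1

lemma OS_apply (v u : Fin m → ℤ) :
    OS v u = ∑ τ : Equiv.Perm (Fin m), if v ∘ τ = u then (1 : ℂ) else 0 := by
  rw [OS, AddMonoidAlgebra.coeff_sum, Finsupp.finset_sum_apply]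
  exact Finset.sum_congr rfl fun τ _ => Finsupp.single_apply

def stabCard (v : Fin m → ℤ) : ℕ :=
  (Finset.univ.filter (fun τ : Equiv.Perm (Fin m) => v ∘ τ = v)).card

lemma OS_apply_self (v : Fin m → ℤ) : OS v v = (stabCard v : ℂ) := by
  classical
  rw [OS_apply, Finset.sum_boole, stabCard]

lemma stabCard_ne_zero (v : Fin m → ℤ) : (stabCard v : ℂ) ≠ 0 := by
  classical
  have h1 : (1 : Equiv.Perm (Fin m)) ∈
      (Finset.univ.filter (fun τ : Equiv.Perm (Fin m) => v ∘ τ = v)) := by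
    rw [Finset.mem_filter]
    exact ⟨Finset.mem_univ _, rfl⟩
  have : stabCard v ≠ 0 := by
    rw [stabCard]
    exact Finset.card_ne_zero_of_mem h1
  exact_mod_cast Nat.cast_ne_zero.mpr this

lemma OS_supp {v u : Fin m → ℤ} (h : OS v u ≠ 0) : ∃ τ : Equiv.Perm (Fin m), u = v ∘ ⇑τ := by
  by_contra hcon
  push_neg at hcon
  apply h
  rw [OS_apply]
  refine Finset.sum_eq_zero fun τ _ => ?_
  rw [if_neg (fun he => hcon τ he.symm)]

lemma OS_symm (v : Fin m → ℤ) : OS v ∈ symmLaurent m := by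
  rw [mem_symm_iff]
  intro σ
  rw [OS, act_sum]
  have h1 : ∀ τ : Equiv.Perm (Fin m), act σ (sg (v ∘ τ) 1) = sg (v ∘ ⇑(τ * σ⁻¹)) 1 := by
    intro τ
    rw [act_single]
    congr 1
  rw [Finset.sum_congr rfl (fun τ _ => h1 τ)]
  exact Equiv.sum_comp (Equiv.mulRight σ⁻¹) (fun τ' => sg (v ∘ ⇑τ') 1)

/-! ### products D c * OS v -/

lemma prod_apply (c : LaurentM m) (v u : Fin m → ℤ) :
    (D c * OS v) u = ∑ τ : Equiv.Perm (Fin m), D c (u - v ∘ τ) := by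
  rw [OS, Finset.mul_sum, AddMonoidAlgebra.coeff_sum, Finsupp.finset_sum_apply]
  refine Finset.sum_congr rfl fun τ _ => ?_
  rw [AddMonoidAlgebra.coeff_mul_single_apply, mul_one, sub_eq_add_neg]

lemma prod_supp {c : LaurentM m} {v u : Fin m → ℤ} (h : (D c * OS v) u ≠ 0) :
    ∃ (a : Fin m → ℤ) (τ : Equiv.Perm (Fin m)), c a ≠ 0 ∧ u = a + a + v ∘ ⇑τ := by
  rw [prod_apply] at h
  obtain ⟨τ, -, hτ⟩ := Finset.exists_ne_zero_of_sum_ne_zero h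
  obtain ⟨a, ha, hae⟩ := D_supp hτ
  refine ⟨a, τ, ha, ?_⟩
  rw [← hae]
  abel

lemma prod_supp_lex {c : LaurentM m} {lam v : Fin m → ℤ} (hv : Dec v)
    (hc : ∀ a, c a ≠ 0 → toLex a ≤ toLex lam) {u : Fin m → ℤ}
    (h : (D c * OS v) u ≠ 0) : toLex u ≤ toLex (lam + lam + v) := by
  obtain ⟨a, τ, ha, rfl⟩ := prod_supp h
  have h1 : toLex a ≤ toLex lam := hc a ha
  have h2 := dec_perm_lex_le hv τ
  calc toLex (a + a + v ∘ τ) = toLex a + toLex a + toLex (v ∘ τ) := rfl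
    _ ≤ toLex lam + toLex lam + toLex v := add_le_add (add_le_add h1 h1) h2
    _ = toLex (lam + lam + v) := rfl

lemma prod_apply_top {c : LaurentM m} {lam v : Fin m → ℤ} (hv : Dec v)
    (hc : ∀ a, c a ≠ 0 → toLex a ≤ toLex lam) :
    (D c * OS v) (lam + lam + v) = c lam * (stabCard v : ℂ) := by
  classical
  rw [prod_apply]
  have key : ∀ τ : Equiv.Perm (Fin m),
      D c (lam + lam + v - v ∘ τ) = if v ∘ τ = v then c lam else 0 := by
    intro τ
    by_cases hτ : v ∘ τ = v
    · rw [if_pos hτ, hτ, show lam + lam + v - v = lam + lam from by abel, D_apply_dbl]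
    · rw [if_neg hτ]
      by_contra hne
      obtain ⟨a, ha, hae⟩ := D_supp hne
      have hlt : toLex (v ∘ τ) < toLex v :=
        lt_of_le_of_ne (dec_perm_lex_le hv τ) (fun hh => hτ (toLex.injective hh))
      have he1 : toLex (a + a) = toLex lam + toLex lam + toLex v - toLex (v ∘ τ) := by
        rw [← hae]; rfl
      have hgt : toLex lam + toLex lam < toLex (a + a) := by
        rw [he1, add_sub_assoc]
        exact lt_add_of_pos_right _ (sub_pos.mpr hlt)
      have hle : toLex a ≤ toLex lam := hc a ha
      have hle2 : toLex (a + a) ≤ toLex lam + toLex lam := add_le_add hle hle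
      exact absurd (lt_of_lt_of_le hgt hle2) (lt_irrefl _)
  rw [Finset.sum_congr rfl (fun τ _ => key τ)]
  rw [Finset.sum_ite, Finset.sum_const, Finset.sum_const_zero, add_zero, stabCard,
    nsmul_eq_mul, mul_comm]


/-! ### staircase binary vectors -/

/-- integer value of a binary digit sequence, extended by `0` beyond `m` -/
def d2i (δ : Fin m → Fin 2) (l : ℕ) : ℤ := if h : l < m then ((δ ⟨l, h⟩ : ℕ) : ℤ) else 0

lemma d2i_nonneg (δ : Fin m → Fin 2) (l : ℕ) : 0 ≤ d2i δ l := by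
  rw [d2i]
  split
  · positivity
  · exact le_refl 0

lemma d2i_le_one (δ : Fin m → Fin 2) (l : ℕ) : d2i δ l ≤ 1 := by
  rw [d2i]
  split
  · rename_i h
    have := (δ ⟨l, h⟩).isLt
    omega
  · omega

def nuN (δ : Fin m → Fin 2) (n : ℕ) : ℤ := ∑ l ∈ Finset.Ico n m, d2i δ l

def nu (δ : Fin m → Fin 2) : Fin m → ℤ := fun j => nuN δ j.val

lemma nuN_anti (δ : Fin m → Fin 2) {n n' : ℕ} (h : n ≤ n') : nuN δ n' ≤ nuN δ n := by
  rw [nuN, nuN]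
  refine Finset.sum_le_sum_of_subset_of_nonneg ?_ (fun l _ _ => d2i_nonneg δ l)
  exact Finset.Ico_subset_Ico h le_rfl

lemma nu_dec (δ : Fin m → Fin 2) : Dec (nu δ) := fun i j hij => nuN_anti δ hij

lemma nuN_nonneg (δ : Fin m → Fin 2) (n : ℕ) : 0 ≤ nuN δ n :=
  Finset.sum_nonneg fun l _ => d2i_nonneg δ l

lemma nu_nonneg (δ : Fin m → Fin 2) (j : Fin m) : 0 ≤ nu δ j := nuN_nonneg δ j.val

lemma nuN_succ (δ : Fin m → Fin 2) {n : ℕ} (h : n < m) :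
    nuN δ n = d2i δ n + nuN δ (n + 1) := by
  rw [nuN, nuN, Finset.sum_eq_sum_Ico_succ_bot h]

lemma nuN_of_le (δ : Fin m → Fin 2) {n : ℕ} (h : m ≤ n) : nuN δ n = 0 := by
  rw [nuN, Finset.Ico_eq_empty (by omega), Finset.sum_empty]

lemma nu_last (δ : Fin m → Fin 2) (h : 0 < m) : nu δ ⟨m - 1, by omega⟩ ≤ 1 := by
  show nuN δ (m - 1) ≤ 1
  rw [nuN_succ δ (show m - 1 < m by omega), nuN_of_le δ (by omega), add_zero]
  exact d2i_le_one δ _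

/-! ### decomposition of a decreasing vector -/

/-- `μ` as a function on `ℕ`, extended by `0`. -/
def muN (μ : Fin m → ℤ) (n : ℕ) : ℤ := if h : n < m then μ ⟨n, h⟩ else 0

/-- binary digits: parities of the successive gaps of `μ` -/
def delOf (μ : Fin m → ℤ) : Fin m → Fin 2 := fun l =>
  if Even (muN μ l.val - muN μ (l.val + 1)) then 0 else 1

lemma d2i_delOf (μ : Fin m → ℤ) {l : ℕ} (h : l < m) :
    d2i (delOf μ) l = if Even (muN μ l - muN μ (l + 1)) then 0 else 1 := by
  rw [d2i, dif_pos h, delOf]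
  split <;> simp

lemma even_gap_sub (μ : Fin m → ℤ) {l : ℕ} (h : l < m) :
    Even (muN μ l - muN μ (l + 1) - d2i (delOf μ) l) := by
  rw [d2i_delOf μ h]
  rcases Int.even_or_odd (muN μ l - muN μ (l + 1)) with he | ho
  · rw [if_pos he, sub_zero]
    exact he
  · rw [if_neg (by simpa [Int.even_iff, Int.odd_iff] using ho)]
    rw [Int.even_iff] at *
    rw [Int.odd_iff] at ho
    omega

lemma parity_mu_nuN (μ : Fin m → ℤ) :
    ∀ k n, n + k = m → Even (muN μ n - nuN (delOf μ) n) := by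
  intro k
  induction k with
  | zero =>
    intro n hn
    rw [muN, dif_neg (by omega), nuN_of_le _ (by omega)]
    simp
  | succ k ih =>
    intro n hn
    have hnm : n < m := by omega
    have h1 := ih (n + 1) (by omega)
    have h2 := even_gap_sub μ hnm
    rw [nuN_succ _ hnm]
    have : muN μ n - (d2i (delOf μ) n + nuN (delOf μ) (n + 1)) =
        (muN μ n - muN μ (n + 1) - d2i (delOf μ) n) + (muN μ (n + 1) - nuN (delOf μ) (n + 1)) := by
      ring
    rw [this]
    exact h2.add h1

lemma parity_mu_nu (μ : Fin m → ℤ) (j : Fin m) :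
    Even (μ j - nu (delOf μ) j) := by
  have := parity_mu_nuN μ (m - j.val) j.val (by omega)
  rw [muN, dif_pos j.isLt, Fin.eta] at this
  exact this

lemma gap_nonneg {μ : Fin m → ℤ} (hμ : Dec μ) {l : ℕ} (h : l + 1 < m) :
    0 ≤ muN μ l - muN μ (l + 1) := by
  rw [muN, muN, dif_pos (by omega), dif_pos h]
  have := hμ ⟨l, by omega⟩ ⟨l + 1, h⟩ (by simp [Fin.le_def])
  omega

lemma d2i_le_gap {μ : Fin m → ℤ} (hμ : Dec μ) {l : ℕ} (h : l + 1 < m) :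
    d2i (delOf μ) l ≤ muN μ l - muN μ (l + 1) := by
  have h0 := gap_nonneg hμ h
  rw [d2i_delOf μ (by omega)]
  split
  · exact h0
  · rename_i hodd
    rw [Int.even_iff] at hodd
    omega

lemma nuN_sub_le (μ : Fin m → ℤ) (hμ : Dec μ) :
    ∀ k n, n + k < m → nuN (delOf μ) n - nuN (delOf μ) (n + k) ≤ muN μ n - muN μ (n + k) := by
  intro k
  induction k with
  | zero => intro n _; simp
  | succ k ih =>
    intro n hn
    have h1 := ih (n + 1) (by omega)
    have h2 := d2i_le_gap hμ (show n + 1 < m by omega)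
    have h3 := nuN_succ (delOf μ) (show n < m by omega)
    have : n + 1 + k = n + (k + 1) := by omega
    rw [this] at h1
    omega

/-- the halved remainder -/
def lamOf (μ : Fin m → ℤ) : Fin m → ℤ := fun j => (μ j - nu (delOf μ) j) / 2

lemma lam_spec (μ : Fin m → ℤ) (j : Fin m) :
    lamOf μ j + lamOf μ j + nu (delOf μ) j = μ j := by
  obtain ⟨r, hr⟩ := parity_mu_nu μ j
  have h2 : μ j - nu (delOf μ) j = 2 * r := by omega
  rw [lamOf, h2, Int.mul_ediv_cancel_left r (by norm_num)]
  omega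

lemma lam_spec' (μ : Fin m → ℤ) : lamOf μ + lamOf μ + nu (delOf μ) = μ := by
  funext j
  exact lam_spec μ j

lemma lam_dec {μ : Fin m → ℤ} (hμ : Dec μ) : Dec (lamOf μ) := by
  intro i j hij
  rcases eq_or_lt_of_le hij with rfl | hij'
  · exact le_rfl
  have hsub := nuN_sub_le μ hμ (j.val - i.val) i.val (by omega)
  have hi := lam_spec μ i
  have hj := lam_spec μ j
  have hij2 : i.val + (j.val - i.val) = j.val := by
    have : i.val < j.val := hij'
    omega
  rw [hij2] at hsub
  have hmi : muN μ i.val = μ i := by rw [muN, dif_pos i.isLt, Fin.eta]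
  have hmj : muN μ j.val = μ j := by rw [muN, dif_pos j.isLt, Fin.eta]
  have hni : nuN (delOf μ) i.val = nu (delOf μ) i := rfl
  have hnj : nuN (delOf μ) j.val = nu (delOf μ) j := rfl
  rw [hmi, hmj, hni, hnj] at hsub
  omega

/-! ### parity injectivity -/

lemma nu_parity_inj {δ δ' : Fin m → Fin 2}
    (h : ∀ j : Fin m, Even (nu δ j - nu δ' j)) : δ = δ' := by
  have key : ∀ k n, n + k = m →
      (nuN δ n = nuN δ' n ∧ ∀ l, n ≤ l → d2i δ l = d2i δ' l) := by
    intro k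
    induction k with
    | zero =>
      intro n hn
      constructor
      · rw [nuN_of_le _ (by omega), nuN_of_le _ (by omega)]
      · intro l hl
        rw [d2i, d2i, dif_neg (by omega), dif_neg (by omega)]
    | succ k ih =>
      intro n hn
      obtain ⟨ih1, ih2⟩ := ih (n + 1) (by omega)
      have hnm : n < m := by omega
      have hpar := h ⟨n, hnm⟩
      have hν : nu δ ⟨n, hnm⟩ = nuN δ n := rfl
      have hν' : nu δ' ⟨n, hnm⟩ = nuN δ' n := rfl
      rw [hν, hν', nuN_succ δ hnm, nuN_succ δ' hnm, ih1] at hpar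
      have heq : d2i δ n = d2i δ' n := by
        have h1 := d2i_nonneg δ n
        have h2 := d2i_nonneg δ' n
        have h3 := d2i_le_one δ n
        have h4 := d2i_le_one δ' n
        obtain ⟨r, hr⟩ := hpar
        omega
      refine ⟨?_, ?_⟩
      · rw [nuN_succ δ hnm, nuN_succ δ' hnm, ih1, heq]
      · intro l hl
        rcases eq_or_lt_of_le hl with rfl | hl'
        · exact heq
        · exact ih2 l (by omega)
  funext l
  have := (key (m - l.val) l.val (by omega)).2 l.val le_rfl
  rw [d2i, d2i, dif_pos l.isLt, dif_pos l.isLt, Fin.eta] at this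
  have h2 : ((δ l : ℕ) : ℤ) = ((δ' l : ℕ) : ℤ) := this
  have h3 : (δ l : ℕ) = (δ' l : ℕ) := by exact_mod_cast h2
  exact Fin.ext h3


/-! ### box bound for product terms -/

lemma T_supp_box {lo M : ℤ} (hlo : Even lo) {lam v : Fin m → ℤ} (hlam : Dec lam) (hv : Dec v)
    (hv0 : ∀ j, 0 ≤ v j) (hvlast : ∀ _ : 0 < m, v ⟨m - 1, by omega⟩ ≤ 1)
    (hbox : ∀ j, lo ≤ lam j + lam j + v j ∧ lam j + lam j + v j ≤ M)
    {c : LaurentM m} (hsup : ∀ a, c a ≠ 0 → ∃ τ : Equiv.Perm (Fin m), a = lam ∘ ⇑τ)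
    {u : Fin m → ℤ} (hu : (D c * OS v) u ≠ 0) :
    ∀ j, lo ≤ u j ∧ u j ≤ M := by
  obtain ⟨a, τ, ha, rfl⟩ := prod_supp hu
  obtain ⟨τ', rfl⟩ := hsup a ha
  intro j
  have hpos : 0 < m := j.pos
  set i0 : Fin m := ⟨0, hpos⟩ with hi0
  set iL : Fin m := ⟨m - 1, by omega⟩ with hiL
  have hle0 : ∀ x : Fin m, i0 ≤ x := by
    intro x
    rw [Fin.le_def]
    exact Nat.zero_le _
  have hleL : ∀ x : Fin m, x ≤ iL := by
    intro x
    rw [Fin.le_def]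
    show x.val ≤ m - 1
    have := x.isLt
    omega
  have h1 : lam (τ' j) ≤ lam i0 := hlam i0 (τ' j) (hle0 _)
  have h2 : v (τ j) ≤ v i0 := hv i0 (τ j) (hle0 _)
  have h3 : lam iL ≤ lam (τ' j) := hlam (τ' j) iL (hleL _)
  have h4 : 0 ≤ v (τ j) := hv0 _
  have hup := (hbox i0).2
  have hlow := (hbox iL).1
  have h5 : v iL ≤ 1 := hvlast hpos
  have h6 : 0 ≤ v iL := hv0 iL
  obtain ⟨r, hr⟩ := hlo
  have huj : (lam ∘ ⇑τ' + lam ∘ ⇑τ' + v ∘ ⇑τ) j = lam (τ' j) + lam (τ' j) + v (τ j) := rfl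
  rw [huj]
  constructor
  · omega
  · omega

lemma T_symm {c : LaurentM m} (hc : c ∈ symmLaurent m) (v : Fin m → ℤ) :
    D c * OS v ∈ symmLaurent m := by
  rw [mem_symm_iff]
  intro σ
  have expand : D c * OS v = ∑ τ : Equiv.Perm (Fin m), D c * sg (v ∘ ⇑τ) 1 := by
    rw [OS, Finset.mul_sum]
  rw [expand, act_sum]
  have step : ∀ τ : Equiv.Perm (Fin m),
      act σ (D c * sg (v ∘ ⇑τ) 1) = D c * sg (v ∘ ⇑(τ * σ⁻¹)) 1 := by
    intro τ
    rw [act_mul_single, act_D, mem_symm_iff.mp hc σ]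
    congr 1
  rw [Finset.sum_congr rfl (fun τ _ => step τ)]
  exact Equiv.sum_comp (Equiv.mulRight σ⁻¹) (fun τ' => D c * sg (v ∘ ⇑τ') 1)

/-! ### existence -/

lemma EX : ∀ (k : ℕ) (lo M : ℤ), Even lo → ∀ w : LaurentM m, w ∈ symmLaurent m →
    (∀ u, w u ≠ 0 → ∀ j, lo ≤ u j ∧ u j ≤ M) →
    ∀ s : Finset (Fin m → ℤ), s.card ≤ k →
    (∀ u : Fin m → ℤ, (∀ j, lo ≤ u j ∧ u j ≤ M) →
      (∃ μ, w μ ≠ 0 ∧ toLex u ≤ toLex μ) → u ∈ s) →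
    ∃ c : (Fin m → Fin 2) → LaurentM m, (∀ δ, c δ ∈ symmLaurent m) ∧
      w = ∑ δ : Fin m → Fin 2, D (c δ) * OS (nu δ) := by
  classical
  intro k
  induction k with
  | zero =>
    intro lo M hlo w hw hbox s hcard hdom
    by_cases hw0 : w = 0
    · refine ⟨0, fun δ => symm_zero, ?_⟩
      rw [hw0]
      symm
      refine Finset.sum_eq_zero fun δ _ => ?_
      rw [Pi.zero_apply, map_zero, zero_mul]
    · exfalso
      obtain ⟨μ, hmem, hmax'⟩ :=
        Finset.exists_max_image w.coeff.support toLex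
          (Finsupp.support_nonempty_iff.mpr (fun h => hw0 (AddMonoidAlgebra.coeff_eq_zero.mp h)))
      have hμ : w μ ≠ 0 := Finsupp.mem_support_iff.mp hmem
      have hμs : μ ∈ s := hdom μ (hbox μ hμ) ⟨μ, hμ, le_rfl⟩
      have : s.card ≠ 0 := Finset.card_ne_zero_of_mem hμs
      omega
  | succ k ih =>
    intro lo M hlo w hw hbox s hcard hdom
    by_cases hw0 : w = 0
    · refine ⟨0, fun δ => symm_zero, ?_⟩
      rw [hw0]
      symm
      refine Finset.sum_eq_zero fun δ _ => ?_
      rw [Pi.zero_apply, map_zero, zero_mul]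
    obtain ⟨μ, hmem, hmax'⟩ :=
      Finset.exists_max_image w.coeff.support toLex
          (Finsupp.support_nonempty_iff.mpr (fun h => hw0 (AddMonoidAlgebra.coeff_eq_zero.mp h)))
    have hμ : w μ ≠ 0 := Finsupp.mem_support_iff.mp hmem
    have hmax : ∀ u, w u ≠ 0 → toLex u ≤ toLex μ := fun u hu =>
      hmax' u (Finsupp.mem_support_iff.mpr hu)
    have hdec : Dec μ := max_dec hw hmax hμ
    set δμ : Fin m → Fin 2 := delOf μ with hδμ
    set lam : Fin m → ℤ := lamOf μ with hlamdef
    have hlam : Dec lam := lam_dec hdec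
    have hsum : lam + lam + nu δμ = μ := lam_spec' μ
    set γ : ℂ := w μ / ((stabCard lam : ℂ) * (stabCard (nu δμ) : ℂ)) with hγ
    set c₀ : LaurentM m := γ • OS lam with hc₀
    have hc₀symm : c₀ ∈ symmLaurent m := symm_smul γ (OS_symm lam)
    have hc₀supp : ∀ a, c₀ a ≠ 0 → ∃ τ : Equiv.Perm (Fin m), a = lam ∘ ⇑τ := by
      intro a ha
      apply OS_supp
      intro h0
      apply ha
      rw [hc₀, AddMonoidAlgebra.coeff_smul_apply, h0, smul_zero]
    have hc₀lex : ∀ a, c₀ a ≠ 0 → toLex a ≤ toLex lam := by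
      intro a ha
      obtain ⟨τ, rfl⟩ := hc₀supp a ha
      exact dec_perm_lex_le hlam τ
    set T : LaurentM m := D c₀ * OS (nu δμ) with hT
    have htop0 := prod_apply_top (nu_dec δμ) hc₀lex
    rw [hsum] at htop0
    have h1 : c₀ lam = γ * (stabCard lam : ℂ) := by
      rw [hc₀, AddMonoidAlgebra.coeff_smul_apply, OS_apply_self, smul_eq_mul]
    have hne : ((stabCard lam : ℂ) * (stabCard (nu δμ) : ℂ)) ≠ 0 :=
      mul_ne_zero (stabCard_ne_zero lam) (stabCard_ne_zero (nu δμ))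
    have hTtop : T μ = w μ := by
      calc T μ = c₀ lam * (stabCard (nu δμ) : ℂ) := htop0
        _ = γ * ((stabCard lam : ℂ) * (stabCard (nu δμ) : ℂ)) := by rw [h1, mul_assoc]
        _ = w μ := by rw [hγ]; exact div_mul_cancel₀ (w μ) hne
    have hTlex : ∀ u, T u ≠ 0 → toLex u ≤ toLex μ := by
      intro u hu
      have := prod_supp_lex (nu_dec δμ) hc₀lex hu
      rwa [hsum] at this
    have hboxμ : ∀ j, lo ≤ lam j + lam j + nu δμ j ∧ lam j + lam j + nu δμ j ≤ M := by
      intro j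
      have := hbox μ hμ j
      have h2 : lam j + lam j + nu δμ j = μ j := congrFun hsum j
      omega
    have hTbox : ∀ u, T u ≠ 0 → ∀ j, lo ≤ u j ∧ u j ≤ M := fun u hu =>
      T_supp_box hlo hlam (nu_dec δμ) (nu_nonneg δμ) (fun h => nu_last δμ h) hboxμ hc₀supp hu
    set w' : LaurentM m := w - T with hw'
    have hw'symm : w' ∈ symmLaurent m := symm_sub hw (T_symm hc₀symm _)
    have hw'cases : ∀ u, w' u ≠ 0 → w u ≠ 0 ∨ T u ≠ 0 := by
      intro u hu
      by_contra hcon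
      push_neg at hcon
      apply hu
      rw [hw', AddMonoidAlgebra.coeff_sub, Finsupp.sub_apply, hcon.1, hcon.2, sub_zero]
    have hw'box : ∀ u, w' u ≠ 0 → ∀ j, lo ≤ u j ∧ u j ≤ M := by
      intro u hu
      rcases hw'cases u hu with h | h
      · exact hbox u h
      · exact hTbox u h
    have hw'top : w' μ = 0 := by
      rw [hw', AddMonoidAlgebra.coeff_sub, Finsupp.sub_apply, hTtop, sub_self]
    have hw'lex : ∀ u, w' u ≠ 0 → toLex u < toLex μ := by
      intro u hu
      have hle : toLex u ≤ toLex μ := by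
        rcases hw'cases u hu with h | h
        · exact hmax u h
        · exact hTlex u h
      rcases lt_or_eq_of_le hle with h | h
      · exact h
      · exfalso
        have : u = μ := toLex.injective h
        rw [this] at hu
        exact hu hw'top
    have hμs' : μ ∈ s := hdom μ (hbox μ hμ) ⟨μ, hμ, le_rfl⟩
    -- appeal to the induction hypothesis with s.erase μ
    have hih := ih lo M hlo w' hw'symm hw'box (s.erase μ)
      (by
        rw [Finset.card_erase_of_mem hμs']
        omega)
      (by
        intro u hbu ⟨μ', hμ'1, hμ'2⟩
        have hlt : toLex μ' < toLex μ := hw'lex μ' hμ'1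
        rw [Finset.mem_erase]
        constructor
        · intro he
          rw [he] at hμ'2
          exact absurd (lt_of_le_of_lt hμ'2 hlt) (lt_irrefl _)
        · exact hdom u hbu ⟨μ, hμ, le_of_lt (lt_of_le_of_lt hμ'2 hlt)⟩)
    obtain ⟨c', hc'symm, hc'sum⟩ := hih
    refine ⟨fun δ => c' δ + if δ = δμ then c₀ else 0, ?_, ?_⟩
    · intro δ
      refine symm_add (hc'symm δ) ?_
      split
      · exact hc₀symm
      · exact symm_zero
    · have hsplit : ∀ δ : Fin m → Fin 2,
          D (c' δ + if δ = δμ then c₀ else 0) * OS (nu δ) =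
            D (c' δ) * OS (nu δ) + (if δ = δμ then T else 0) := by
        intro δ
        rw [map_add, add_mul]
        congr 1
        by_cases h : δ = δμ
        · rw [if_pos h, if_pos h, hT, h]
        · rw [if_neg h, if_neg h, map_zero, zero_mul]
      rw [Finset.sum_congr rfl (fun δ _ => hsplit δ), Finset.sum_add_distrib,
        Finset.sum_ite_eq' Finset.univ δμ (fun _ => T), if_pos (Finset.mem_univ _), ← hc'sum]
      rw [hw']
      abel

/-! ### uniqueness -/

lemma UQ (c : (Fin m → Fin 2) → LaurentM m) (hsymm : ∀ δ, c δ ∈ symmLaurent m)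
    (hsum : ∑ δ : Fin m → Fin 2, D (c δ) * OS (nu δ) = 0) : ∀ δ, c δ = 0 := by
  classical
  by_contra hcon
  push_neg at hcon
  obtain ⟨δ₀, hδ₀⟩ := hcon
  set S : Finset (Fin m → Fin 2) := Finset.univ.filter (fun δ => c δ ≠ 0) with hS
  have hSne : S.Nonempty := ⟨δ₀, by rw [hS, Finset.mem_filter]; exact ⟨Finset.mem_univ _, hδ₀⟩⟩
  set tt : (Fin m → Fin 2) → (Fin m → ℤ) := fun δ =>
    if h : (c δ).coeff.support.Nonempty then ofLex (((c δ).coeff.support.image toLex).max' (h.image _)) else 0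
    with htt
  have htt_mem : ∀ δ ∈ S, tt δ ∈ (c δ).coeff.support := by
    intro δ hδ
    rw [hS, Finset.mem_filter] at hδ
    have hne : (c δ).coeff.support.Nonempty := Finsupp.support_nonempty_iff.mpr
        (fun h => hδ.2 (AddMonoidAlgebra.coeff_eq_zero.mp h))
    rw [htt]
    simp only [dif_pos hne]
    have hmem := Finset.max'_mem ((c δ).coeff.support.image toLex) (hne.image _)
    rw [Finset.mem_image] at hmem
    obtain ⟨a, ha, hEq⟩ := hmem
    rw [← hEq]
    exact ha
  have htt_max : ∀ δ ∈ S, ∀ a, c δ a ≠ 0 → toLex a ≤ toLex (tt δ) := by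
    intro δ hδ a ha
    rw [hS, Finset.mem_filter] at hδ
    have hne : (c δ).coeff.support.Nonempty := Finsupp.support_nonempty_iff.mpr
        (fun h => hδ.2 (AddMonoidAlgebra.coeff_eq_zero.mp h))
    rw [htt]
    simp only [dif_pos hne]
    have h1 : toLex a ≤ ((c δ).coeff.support.image toLex).max' (hne.image _) :=
      Finset.le_max' _ _ (Finset.mem_image_of_mem toLex (Finsupp.mem_support_iff.mpr ha))
    simpa using h1
  obtain ⟨δs, hδsS, hδsmax⟩ :=
    Finset.exists_max_image S (fun δ => toLex (tt δ + tt δ + nu δ)) hSne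
  set μs : Fin m → ℤ := tt δs + tt δs + nu δs with hμs
  have h0 : (∑ δ : Fin m → Fin 2, D (c δ) * OS (nu δ)) μs = 0 := by rw [hsum]; rfl
  rw [AddMonoidAlgebra.coeff_sum, Finsupp.finset_sum_apply] at h0
  rw [Finset.sum_eq_single δs (fun δ _ hne => ?_) (fun h => absurd (Finset.mem_univ δs) h)] at h0
  · have htop := prod_apply_top (nu_dec δs) (htt_max δs hδsS)
    rw [hμs] at h0
    rw [htop] at h0
    have h1 : c δs (tt δs) ≠ 0 := Finsupp.mem_support_iff.mp (htt_mem δs hδsS)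
    exact absurd h0 (mul_ne_zero h1 (stabCard_ne_zero (nu δs)))
  · by_cases hcδ : c δ = 0
    · rw [hcδ, map_zero, zero_mul]
      rfl
    · have hδS : δ ∈ S := by rw [hS, Finset.mem_filter]; exact ⟨Finset.mem_univ _, hcδ⟩
      by_contra hne0
      have hle1 : toLex μs ≤ toLex (tt δ + tt δ + nu δ) :=
        prod_supp_lex (nu_dec δ) (htt_max δ hδS) hne0
      have hle2 : toLex (tt δ + tt δ + nu δ) ≤ toLex μs := hδsmax δ hδS
      have heq : tt δ + tt δ + nu δ = μs := toLex.injective (le_antisymm hle2 hle1)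
      have hpar : ∀ j, Even (nu δ j - nu δs j) := by
        intro j
        have h1 : tt δ j + tt δ j + nu δ j = tt δs j + tt δs j + nu δs j := by
          have := congrFun heq j
          rw [hμs] at this
          exact this
        exact ⟨tt δs j - tt δ j, by omega⟩
      exact hne (nu_parity_inj hpar)


lemma act_zero (σ : Equiv.Perm (Fin m)) : act σ (0 : LaurentM m) = 0 := by
  ext v
  rw [act_apply]
  rfl

/-! ### global existence -/

lemma EXfull (w : LaurentM m) (hw : w ∈ symmLaurent m) :
    ∃ c : (Fin m → Fin 2) → LaurentM m, (∀ δ, c δ ∈ symmLaurent m) ∧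
      w = ∑ δ : Fin m → Fin 2, D (c δ) * OS (nu δ) := by
  classical
  obtain ⟨B0, hB0⟩ : ∃ B0 : ℕ, ∀ u, w u ≠ 0 → ∀ j, (u j).natAbs ≤ B0 := by
    refine ⟨w.coeff.support.sup (fun u => Finset.univ.sup (fun j => (u j).natAbs)), ?_⟩
    intro u hu j
    calc (u j).natAbs ≤ Finset.univ.sup (fun j => (u j).natAbs) :=
          Finset.le_sup (f := fun j => (u j).natAbs) (Finset.mem_univ j)
      _ ≤ _ := Finset.le_sup (f := fun u => Finset.univ.sup (fun j => (u j).natAbs))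
          (Finsupp.mem_support_iff.mpr hu)
  refine EX (Finset.Icc (fun _ => -(2 * ((B0 : ℤ) + 1))) (fun _ => (B0 : ℤ))).card
    (-(2 * ((B0 : ℤ) + 1))) (B0 : ℤ) ⟨-((B0 : ℤ) + 1), by ring⟩ w hw ?_ _ le_rfl ?_
  · intro u hu j
    have := hB0 u hu j
    omega
  · intro u hbu _
    rw [Finset.mem_Icc]
    exact ⟨fun j => (hbu j).1, fun j => (hbu j).2⟩

/-! ### the transfer map Θ -/

def iotaE (ε : Fin m → Fin 2) : Fin m → ℤ := fun j => ((ε j : ℕ) : ℤ)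

def Th (F : (Fin m → Fin 2) → LaurentM m) : LaurentM m :=
  ∑ ε : Fin m → Fin 2, D (F ε) * sg (iotaE ε) 1

lemma Th_coeff (F : (Fin m → Fin 2) → LaurentM m) (ε : Fin m → Fin 2) (a : Fin m → ℤ) :
    Th F (a + a + iotaE ε) = F ε a := by
  classical
  rw [Th, AddMonoidAlgebra.coeff_sum, Finsupp.finset_sum_apply]
  rw [Finset.sum_eq_single ε ?h0 ?h1]
  · rw [AddMonoidAlgebra.coeff_mul_single_apply, mul_one, ← sub_eq_add_neg,
      show a + a + iotaE ε - iotaE ε = a + a from by abel, D_apply_dbl]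
  case h0 =>
    intro ε' _ hne
    rw [AddMonoidAlgebra.coeff_mul_single_apply, mul_one]
    by_contra h0
    obtain ⟨b, hb, hbe⟩ := D_supp h0
    obtain ⟨j, hj⟩ := Function.ne_iff.mp hne
    have hcf := congrFun hbe j
    have hεj : (ε j).val < 2 := (ε j).isLt
    have hε'j : (ε' j).val < 2 := (ε' j).isLt
    have hne2 : (ε' j).val ≠ (ε j).val := fun h => hj (Fin.ext h)
    have hcf2 : a j + a j + ((ε j : ℕ) : ℤ) - ((ε' j : ℕ) : ℤ) = b j + b j := hcf
    omega
  case h1 =>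
    intro h
    exact absurd (Finset.mem_univ ε) h

lemma Th_inj {F G : (Fin m → Fin 2) → LaurentM m} (h : Th F = Th G) : F = G := by
  funext ε
  ext a
  rw [← Th_coeff F ε a, ← Th_coeff G ε a, h]

lemma Th_smulmul (p : LaurentM m) (F : (Fin m → Fin 2) → LaurentM m) :
    Th (fun ε => p * F ε) = D p * Th F := by
  rw [Th, Th, Finset.mul_sum]
  refine Finset.sum_congr rfl fun ε _ => ?_
  rw [D_mul, mul_assoc]

lemma Th_sum {α : Type*} (s : Finset α) (F : α → (Fin m → Fin 2) → LaurentM m) :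
    Th (fun ε => ∑ x ∈ s, F x ε) = ∑ x ∈ s, Th (F x) := by
  rw [Th]
  have step : ∀ ε : Fin m → Fin 2, D (∑ x ∈ s, F x ε) * sg (iotaE ε) 1
      = ∑ x ∈ s, D (F x ε) * sg (iotaE ε) 1 := by
    intro ε
    rw [map_sum, Finset.sum_mul]
  rw [Finset.sum_congr rfl fun ε _ => step ε, Finset.sum_comm]
  exact Finset.sum_congr rfl fun x _ => rfl

lemma Th_symm {F : (Fin m → Fin 2) → LaurentM m} (hF : F ∈ symPower m) :
    Th F ∈ symmLaurent m := by
  rw [mem_symm_iff]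
  intro σ
  rw [Th, act_sum]
  have step : ∀ ε : Fin m → Fin 2, act σ (D (F ε) * sg (iotaE ε) 1)
      = D (F (ε ∘ ⇑σ.symm)) * sg (iotaE (ε ∘ ⇑σ.symm)) 1 := by
    intro ε
    have hcomp : (ε ∘ ⇑σ.symm) ∘ ⇑σ = ε := by
      funext x
      simp
    have hFε : act σ (F ε) = F (ε ∘ ⇑σ.symm) := by
      conv_lhs => rw [← hcomp]
      exact hF σ (ε ∘ ⇑σ.symm)
    rw [act_mul_single, act_D, hFε]
    rfl
  rw [Finset.sum_congr rfl fun ε _ => step ε]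
  exact Fintype.sum_bijective (fun ε : Fin m → Fin 2 => ε ∘ ⇑σ.symm)
    (Equiv.arrowCongr σ (Equiv.refl (Fin 2))).bijective
    (fun ε => D (F (ε ∘ ⇑σ.symm)) * sg (iotaE (ε ∘ ⇑σ.symm)) 1)
    (fun ε => D (F ε) * sg (iotaE ε) 1) (fun ε => rfl)

/-! ### basis elements -/

def ka (δ : Fin m → Fin 2) : Fin m → ℤ := fun j => nu δ j / 2

def pa (δ : Fin m → Fin 2) : Fin m → Fin 2 := fun j => if Even (nu δ j) then 0 else 1

lemma nu_split (δ : Fin m → Fin 2) (j : Fin m) :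
    ka δ j + ka δ j + iotaE (pa δ) j = nu δ j := by
  have h := Int.mul_ediv_add_emod (nu δ j) 2
  have h2 := Int.emod_two_eq (nu δ j)
  rw [ka, iotaE, pa]
  by_cases he : Even (nu δ j)
  · rw [if_pos he]
    rw [Int.even_iff] at he
    simp only [Fin.val_zero, Nat.cast_zero]
    omega
  · rw [if_neg he]
    rw [Int.even_iff] at he
    simp only [Fin.val_one, Nat.cast_one]
    omega

def B (δ : Fin m → Fin 2) : (Fin m → Fin 2) → LaurentM m := fun ε =>
  ∑ τ : Equiv.Perm (Fin m), if pa δ ∘ ⇑τ = ε then sg (ka δ ∘ ⇑τ) 1 else 0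

lemma Th_B (δ : Fin m → Fin 2) : Th (B δ) = OS (nu δ) := by
  classical
  rw [Th]
  have expand : ∀ ε : Fin m → Fin 2, D (B δ ε) * sg (iotaE ε) 1 =
      ∑ τ : Equiv.Perm (Fin m),
        if pa δ ∘ ⇑τ = ε then sg (ka δ ∘ ⇑τ + ka δ ∘ ⇑τ + iotaE ε) 1 else 0 := by
    intro ε
    rw [B, map_sum, Finset.sum_mul]
    refine Finset.sum_congr rfl fun τ _ => ?_
    by_cases h : pa δ ∘ ⇑τ = ε
    · rw [if_pos h, if_pos h, D_single, AddMonoidAlgebra.single_mul_single, one_mul]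
    · rw [if_neg h, if_neg h, map_zero, zero_mul]
  rw [Finset.sum_congr rfl fun ε _ => expand ε, Finset.sum_comm]
  rw [OS]
  refine Finset.sum_congr rfl fun τ _ => ?_
  rw [Finset.sum_ite_eq Finset.univ (pa δ ∘ ⇑τ)
    (fun ε => sg (ka δ ∘ ⇑τ + ka δ ∘ ⇑τ + iotaE ε) 1), if_pos (Finset.mem_univ _)]
  congr 1
  funext j
  exact nu_split δ (τ j)

lemma B_symm (δ : Fin m → Fin 2) : B δ ∈ symPower m := by
  classical
  intro σ ε
  show act σ (B δ (ε ∘ ⇑σ)) = B δ ε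
  rw [B, act_sum]
  have step : ∀ τ : Equiv.Perm (Fin m),
      act σ (if pa δ ∘ ⇑τ = ε ∘ ⇑σ then sg (ka δ ∘ ⇑τ) 1 else 0)
      = (fun τ' : Equiv.Perm (Fin m) =>
          if pa δ ∘ ⇑τ' = ε then sg (ka δ ∘ ⇑τ') 1 else 0) (τ * σ⁻¹) := by
    intro τ
    have hiff : pa δ ∘ ⇑τ = ε ∘ ⇑σ ↔ pa δ ∘ ⇑(τ * σ⁻¹) = ε := by
      constructor
      · intro h
        funext x
        have := congrFun h (σ.symm x)
        simpa using this
      · intro h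
        funext x
        have := congrFun h (σ x)
        simpa using this
    by_cases h : pa δ ∘ ⇑τ = ε ∘ ⇑σ
    · rw [if_pos h]
      simp only [if_pos (hiff.mp h)]
      rw [act_single]
      rfl
    · rw [if_neg h]
      simp only [if_neg (fun hh => h (hiff.mpr hh))]
      exact act_zero σ
  rw [Finset.sum_congr rfl fun τ _ => step τ]
  exact Equiv.sum_comp (Equiv.mulRight σ⁻¹)
    (fun τ' => if pa δ ∘ ⇑τ' = ε then sg (ka δ ∘ ⇑τ') 1 else 0)


end St13

open St13

/-- `S^m(V ⊗ ℂ[t,t⁻¹])` is a free module of rank `2^m` over the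
ring `ℂ[t₁^{±1},…,t_m^{±1}]^{Σ_m}` of symmetric Laurent polynomials (acting by
multiplication on the Laurent-polynomial tensor factor): there is a basis
`b : Fin (2^m) → S^m` such that every element of `S^m` is a unique linear
combination of the `b j` with symmetric Laurent polynomial coefficients. -/
theorem stmt_13 (m : ℕ) :
    ∃ b : Fin (2 ^ m) → ((Fin m → Fin 2) → LaurentM m),
      (∀ j, b j ∈ symPower m) ∧
      ∀ F ∈ symPower m,
        ∃! c : Fin (2 ^ m) → symmLaurent m,
          F = fun ε => ∑ j, (c j : LaurentM m) * b j ε := by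
  classical
  set e : (Fin m → Fin 2) ≃ Fin (2 ^ m) := finFunctionFinEquiv with he
  refine ⟨fun j => B (e.symm j), fun j => B_symm _, ?_⟩
  intro F hF
  obtain ⟨c, hcsymm, hcsum⟩ := EXfull (Th F) (Th_symm hF)
  have key : ∀ d : Fin (2 ^ m) → symmLaurent m,
      Th (fun ε => ∑ j, (d j : LaurentM m) * B (e.symm j) ε)
        = ∑ δ : Fin m → Fin 2, D ((d (e δ) : LaurentM m)) * OS (nu δ) := by
    intro d
    rw [Th_sum Finset.univ (fun j ε => (d j : LaurentM m) * B (e.symm j) ε)]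
    have h1 : ∀ j : Fin (2 ^ m), Th (fun ε => (d j : LaurentM m) * B (e.symm j) ε)
        = D (d j : LaurentM m) * OS (nu (e.symm j)) := by
      intro j
      rw [Th_smulmul, Th_B]
    rw [Finset.sum_congr rfl fun j _ => h1 j,
      ← Equiv.sum_comp e (fun j => D ((d j : LaurentM m)) * OS (nu (e.symm j)))]
    exact Finset.sum_congr rfl fun δ _ => by rw [Equiv.symm_apply_apply]
  refine ⟨fun j => ⟨c (e.symm j), hcsymm _⟩, ?_, ?_⟩
  · show F = fun ε => ∑ j, ((⟨c (e.symm j), hcsymm _⟩ : symmLaurent m) : LaurentM m)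
      * B (e.symm j) ε
    apply Th_inj
    rw [key (fun j => ⟨c (e.symm j), hcsymm _⟩), hcsum]
    exact Finset.sum_congr rfl fun δ _ => by rw [Equiv.symm_apply_apply]
  · intro d hd
    have h2 : Th F = ∑ δ : Fin m → Fin 2, D ((d (e δ) : LaurentM m)) * OS (nu δ) := by
      conv_lhs => rw [hd]
      exact key d
    have hdiff : ∑ δ : Fin m → Fin 2,
        D ((d (e δ) : LaurentM m) - c δ) * OS (nu δ) = 0 := by
      have hstep : ∀ δ : Fin m → Fin 2, D ((d (e δ) : LaurentM m) - c δ) * OS (nu δ)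
          = D (d (e δ) : LaurentM m) * OS (nu δ) - D (c δ) * OS (nu δ) := by
        intro δ
        rw [map_sub, sub_mul]
      rw [Finset.sum_congr rfl fun δ _ => hstep δ, Finset.sum_sub_distrib, ← h2, ← hcsum,
        sub_self]
    have hz := UQ _ (fun δ => symm_sub (d (e δ)).2 (hcsymm δ)) hdiff
    funext j
    have hzj := hz (e.symm j)
    rw [Equiv.apply_symm_apply] at hzj
    exact Subtype.ext (by rw [← sub_eq_zero]; exact hzj)
end
end
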